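/- arXiv:1911.04855 — 5 statements merged into one kernel-verified Lean document; each statement's English description precedes it below -/
import Mathlib

section
/- Let X be a real Hilbert space, let u₁,…,u_N ∈ X \ {0} and α₁,…,α_N ∈ ℝ, and suppose the intersection H := ⋂_{i=1}^N H(u_i, α_i) of the hyperplanes is nonempty. Fix x ∈ X and define h : ℝ^N → ℝ by h(t) = ½‖x − Σ_{i=1}^N t_i u_i‖² + Σ_{i=1}^N t_i α_i. If t̃ ∈ ℝ^N is a global minimizer of h, then the metric projection of x onto H is P_H(x) = x − Σ_{i=1}^N t̃_i u_i. -/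
/-!
Perturbing the minimizer `t̃` in the `i`-th coordinate changes `h` by the quadratic
`s (αᵢ - ⟪uᵢ, y⟫) + s² ‖uᵢ‖² / 2`, where `y = x - ∑ t̃ᵢ uᵢ`; its vanishing derivative at `s = 0`
puts `y` on every hyperplane. Then `x - y = ∑ t̃ᵢ uᵢ` is orthogonal to `y - z` for all `z ∈ H`,
and Pythagoras gives `‖x - y‖ ≤ ‖x - z‖`.
-/

open RealInnerProductSpace

theorem eq_zero_of_forall_nonneg_mul_add_sq_mul {c d : ℝ} (h : ∀ s : ℝ, 0 ≤ s * c + s ^ 2 * d) :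
    c = 0 := by
  have hmin : IsLocalMin (fun s : ℝ => s * c + s ^ 2 * d) 0 :=
    Filter.Eventually.of_forall fun s => by simpa using h s
  have hderiv : HasDerivAt (fun s : ℝ => s * c + s ^ 2 * d) c 0 :=
    ((hasDerivAt_mul_const c).add ((hasDerivAt_pow 2 (0 : ℝ)).mul_const d)).congr_deriv
      (by simp)
  exact hmin.hasDerivAt_eq_zero hderiv

theorem norm_sub_le_norm_sub_of_inner_eq_zero {E : Type*} [NormedAddCommGroup E]
    [InnerProductSpace ℝ E] {x y z : E} (h : ⟪x - y, y - z⟫ = 0) : ‖x - y‖ ≤ ‖x - z‖ := by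
  have hpyth := norm_add_sq_eq_norm_sq_add_norm_sq_real h
  rw [sub_add_sub_cancel] at hpyth
  exact le_of_sq_le_sq (by nlinarith [mul_self_nonneg ‖y - z‖]) (norm_nonneg _)

section DualObjective

variable {X ι : Type*} [NormedAddCommGroup X] [InnerProductSpace ℝ X] [Fintype ι]
  (u : ι → X) (α : ι → ℝ) (x : X)

noncomputable def dualObjective (t : ι → ℝ) : ℝ :=
  (1 / 2) * ‖x - ∑ i, t i • u i‖ ^ 2 + ∑ i, t i * α i

theorem dualObjective_add_single [DecidableEq ι] (t : ι → ℝ) (i : ι) (s : ℝ) :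
    dualObjective u α x (t + Pi.single i s) = dualObjective u α x t
      + s * (α i - ⟪u i, x - ∑ j, t j • u j⟫) + s ^ 2 * (‖u i‖ ^ 2 / 2) := by
  have hvec : ∑ j, (t + Pi.single i s : ι → ℝ) j • u j = ∑ j, t j • u j + s • u i := by
    simp [add_smul, Finset.sum_add_distrib, Pi.single_apply, ite_smul]
  have hlin : ∑ j, (t + Pi.single i s : ι → ℝ) j * α j = ∑ j, t j * α j + s * α i := by
    simp [add_mul, Finset.sum_add_distrib, Pi.single_apply, ite_mul]
  rw [dualObjective, dualObjective, hvec, hlin, ← sub_sub, norm_sub_sq_real, inner_smul_right,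
    real_inner_comm, norm_smul, mul_pow, Real.norm_eq_abs, sq_abs]
  ring

theorem inner_eq_of_dualObjective_le {t : ι → ℝ}
    (hmin : ∀ t', dualObjective u α x t ≤ dualObjective u α x t') (i : ι) :
    ⟪u i, x - ∑ j, t j • u j⟫ = α i := by
  classical
  have hquad := eq_zero_of_forall_nonneg_mul_add_sq_mul
    (c := α i - ⟪u i, x - ∑ j, t j • u j⟫) (d := ‖u i‖ ^ 2 / 2) fun s => by
    have := hmin (t + Pi.single i s)
    rw [dualObjective_add_single] at this
    linarith
  linarith

theorem inner_sum_smul_sub_eq_zero {t : ι → ℝ} {y z : X} (hy : ∀ i, ⟪u i, y⟫ = α i)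
    (hz : ∀ i, ⟪u i, z⟫ = α i) : ⟪∑ i, t i • u i, y - z⟫ = 0 := by
  simp [sum_inner, inner_smul_left, inner_sub_right, hy, hz]

end DualObjective

theorem metric_projection_intersection_hyperplanes_general
    {X : Type*} [NormedAddCommGroup X] [InnerProductSpace ℝ X]
    {N : ℕ} (u : Fin N → X) (α : Fin N → ℝ)
    (H : Set X) (hH : H = ⋂ i, {z : X | ⟪u i, z⟫ = α i})
    (x : X) (h : (Fin N → ℝ) → ℝ)
    (hdef : ∀ t : Fin N → ℝ,
      h t = (1 / 2) * ‖x - ∑ i, t i • u i‖ ^ 2 + ∑ i, t i * α i)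
    (ttilde : Fin N → ℝ) (hmin : ∀ t : Fin N → ℝ, h ttilde ≤ h t) :
    (x - ∑ i, ttilde i • u i) ∈ H ∧
      ∀ z ∈ H, ‖x - (x - ∑ i, ttilde i • u i)‖ ≤ ‖x - z‖ := by
  obtain rfl : h = dualObjective u α x := funext hdef
  have hy : ∀ i, ⟪u i, x - ∑ j, ttilde j • u j⟫ = α i := inner_eq_of_dualObjective_le u α x hmin
  subst hH
  refine ⟨Set.mem_iInter.2 hy, fun z hz => norm_sub_le_norm_sub_of_inner_eq_zero ?_⟩
  rw [sub_sub_cancel]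
  exact inner_sum_smul_sub_eq_zero u α hy (Set.mem_iInter.1 hz)

/-- Projection onto a nonempty intersection of hyperplanes via minimization:
if `t̃` is a global minimizer of `h(t) = ½‖x − Σ tᵢ uᵢ‖² + Σ tᵢ αᵢ`, then
`P_H(x) = x − Σ t̃ᵢ uᵢ`, where `H = ⋂ᵢ H(uᵢ,αᵢ)`. -/
theorem metric_projection_intersection_hyperplanes
    {X : Type*} [NormedAddCommGroup X] [InnerProductSpace ℝ X] [CompleteSpace X]
    {N : ℕ} (u : Fin N → X) (hu : ∀ i, u i ≠ 0) (α : Fin N → ℝ)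
    (H : Set X) (hH : H = ⋂ i, {z : X | ⟪u i, z⟫ = α i}) (hHne : H.Nonempty)
    (x : X) (h : (Fin N → ℝ) → ℝ)
    (hdef : ∀ t : Fin N → ℝ,
      h t = (1 / 2) * ‖x - ∑ i, t i • u i‖ ^ 2 + ∑ i, t i * α i)
    (ttilde : Fin N → ℝ) (hmin : ∀ t : Fin N → ℝ, h ttilde ≤ h t) :
    (x - ∑ i, ttilde i • u i) ∈ H ∧
      ∀ z ∈ H, ‖x - (x - ∑ i, ttilde i • u i)‖ ≤ ‖x - z‖ :=
  metric_projection_intersection_hyperplanes_general u α H hH x h hdef ttilde hmin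
end

section
/- Let X and Y be real Hilbert spaces, F : X → Y a map that is Fréchet differentiable at a point x_i ∈ X with derivative F'(x_i) (a bounded linear operator from X to Y). Let x ∈ X, y, y^δ ∈ Y and δ ≥ 0, c_tc ≥ 0 be such that F(x) = y, ‖y^δ − y‖ ≤ δ, and the tangential cone estimate ‖F(x) − F(x_i) − F'(x_i)(x − x_i)‖ ≤ c_tc ‖F(x) − F(x_i)‖ holds. Then for every w ∈ Y, setting u := F'(x_i)*w, α := ⟨u, x_i⟩ − ⟨w, F(x_i) − y^δ⟩ and ξ := ‖w‖ (c_tc (‖F(x_i) − y^δ‖ + δ) + δ), one has |⟨u, x⟩ − α| ≤ ξ; that is, x lies in the stripe H(u, α, ξ). -/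
open RealInnerProductSpace

/-! Moving `F'(x_i)*` across the inner product turns the stripe residual into
`⟪w, (F x - y^δ) - (F x - F x_i - F'(x_i)(x - x_i))⟫`; Cauchy–Schwarz then bounds it by `‖w‖` times
the data error, at most `δ`, plus the linearization error, which the tangential cone condition
bounds by `c_tc ‖F x - F x_i‖ ≤ c_tc (‖F x_i - y^δ‖ + δ)`. -/

section StripeResidual

variable {X Y : Type*} [NormedAddCommGroup X] [InnerProductSpace ℝ X] [CompleteSpace X]
  [NormedAddCommGroup Y] [InnerProductSpace ℝ Y] [CompleteSpace Y]

theorem inner_adjoint_sub_stripe_offset_eq (A : X →L[ℝ] Y) (w : Y) (x xi : X) (Fx Fxi yδ : Y) :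
    ⟪A.adjoint w, x⟫ - (⟪A.adjoint w, xi⟫ - ⟪w, Fxi - yδ⟫) =
      ⟪w, (Fx - yδ) - (Fx - Fxi - A (x - xi))⟫ := by
  rw [A.adjoint_inner_left, A.adjoint_inner_left, ← inner_sub_right, ← inner_sub_right,
    map_sub]
  congr 1
  abel

theorem abs_inner_adjoint_sub_stripe_offset_le (A : X →L[ℝ] Y) (w : Y) (x xi : X)
    (Fx Fxi yδ : Y) :
    |⟪A.adjoint w, x⟫ - (⟪A.adjoint w, xi⟫ - ⟪w, Fxi - yδ⟫)| ≤
      ‖w‖ * (‖Fx - Fxi - A (x - xi)‖ + ‖Fx - yδ‖) := by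
  rw [inner_adjoint_sub_stripe_offset_eq A w x xi Fx Fxi yδ, add_comm]
  exact (abs_real_inner_le_norm _ _).trans
    (mul_le_mul_of_nonneg_left (norm_sub_le _ _) (norm_nonneg w))

end StripeResidual

theorem solution_in_stripe_nonlinear_general
    {X Y : Type*} [NormedAddCommGroup X] [InnerProductSpace ℝ X] [CompleteSpace X]
    [NormedAddCommGroup Y] [InnerProductSpace ℝ Y] [CompleteSpace Y]
    (F : X → Y) (xi : X) (F' : X →L[ℝ] Y)
    (x : X) (y yδ : Y) (δ ctc : ℝ) (hctc : 0 ≤ ctc)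
    (hsol : F x = y) (hnoise : ‖yδ - y‖ ≤ δ)
    (htc : ‖F x - F xi - F' (x - xi)‖ ≤ ctc * ‖F x - F xi‖)
    (w : Y) :
    |⟪(ContinuousLinearMap.adjoint F') w, x⟫ -
        (⟪(ContinuousLinearMap.adjoint F') w, xi⟫ - ⟪w, F xi - yδ⟫)| ≤
      ‖w‖ * (ctc * (‖F xi - yδ‖ + δ) + δ) := by
  subst hsol
  have hdata : ‖F x - yδ‖ ≤ δ := norm_sub_rev (F x) yδ ▸ hnoise
  have hjump : ‖F x - F xi‖ ≤ ‖F xi - yδ‖ + δ :=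
    calc ‖F x - F xi‖ ≤ ‖F x - yδ‖ + ‖yδ - F xi‖ := norm_sub_le_norm_sub_add_norm_sub _ _ _
      _ ≤ ‖F xi - yδ‖ + δ := by rw [norm_sub_rev yδ]; linarith
  have hlin : ‖F x - F xi - F' (x - xi)‖ ≤ ctc * (‖F xi - yδ‖ + δ) :=
    htc.trans (mul_le_mul_of_nonneg_left hjump hctc)
  exact (abs_inner_adjoint_sub_stripe_offset_le F' w x xi (F x) (F xi) yδ).trans
    (mul_le_mul_of_nonneg_left (add_le_add hlin hdata) (norm_nonneg w))

/-- Nonlinear stripe containment: if `F(x) = y`, `‖y^δ − y‖ ≤ δ` and the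
tangential cone estimate holds at `x_i`, then `x` lies in the stripe
`H(u, α, ξ)` with `u = F'(x_i)*w`, `α = ⟪u, x_i⟫ − ⟪w, F(x_i) − y^δ⟫` and
`ξ = ‖w‖ (c_tc(‖F(x_i) − y^δ‖ + δ) + δ)`. -/
theorem solution_in_stripe_nonlinear
    {X Y : Type*} [NormedAddCommGroup X] [InnerProductSpace ℝ X] [CompleteSpace X]
    [NormedAddCommGroup Y] [InnerProductSpace ℝ Y] [CompleteSpace Y]
    (F : X → Y) (xi : X) (F' : X →L[ℝ] Y) (hF : HasFDerivAt F F' xi)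
    (x : X) (y yδ : Y) (δ ctc : ℝ) (hδ : 0 ≤ δ) (hctc : 0 ≤ ctc)
    (hsol : F x = y) (hnoise : ‖yδ - y‖ ≤ δ)
    (htc : ‖F x - F xi - F' (x - xi)‖ ≤ ctc * ‖F x - F xi‖)
    (w : Y) :
    |⟪(ContinuousLinearMap.adjoint F') w, x⟫ -
        (⟪(ContinuousLinearMap.adjoint F') w, xi⟫ - ⟪w, F xi - yδ⟫)| ≤
      ‖w‖ * (ctc * (‖F xi - yδ‖ + δ) + δ) :=
  solution_in_stripe_nonlinear_general F xi F' x y yδ δ ctc hctc hsol hnoise htc w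
end

section
/- Let X and Y be real Hilbert spaces, F : X → Y Fréchet differentiable at x_n ∈ X, and let x ∈ X, y, y^δ ∈ Y, δ ≥ 0, c_tc ≥ 0 satisfy F(x) = y, ‖y^δ − y‖ ≤ δ and ‖F(x) − F(x_n) − F'(x_n)(x − x_n)‖ ≤ c_tc ‖F(x) − F(x_n)‖. Define the residual R_n := F(x_n) − y^δ, the Landweber search direction u_n := F'(x_n)* R_n, and set α_n := ⟨u_n, x_n⟩ − ‖R_n‖², ξ_n := ‖R_n‖ (δ + c_tc (‖R_n‖ + δ)). Then |⟨u_n, x⟩ − α_n| ≤ ξ_n; that is, every solution of F(x) = y satisfying the tangential cone estimate lies in the stripe H(u_n, α_n, ξ_n). -/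
/-!
Moving the adjoint across the inner product turns the defect `⟪u_n, x⟫ - α_n` into
`⟪R_n, F'(x_n)(x - x_n) + R_n⟫`, and `F'(x_n)(x - x_n) + R_n` equals the data error `y - y^δ`
minus the linearization error, which the noise level and the tangential cone condition bound.
-/

open RealInnerProductSpace

lemma inner_adjoint_sub_sub_norm_sq {X Y : Type*} [NormedAddCommGroup X] [InnerProductSpace ℝ X]
    [CompleteSpace X] [NormedAddCommGroup Y] [InnerProductSpace ℝ Y] [CompleteSpace Y]
    (A : X →L[ℝ] Y) (r : Y) (x x₀ : X) :
    ⟪(ContinuousLinearMap.adjoint A) r, x⟫ - (⟪(ContinuousLinearMap.adjoint A) r, x₀⟫ - ‖r‖ ^ 2) =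
      ⟪r, A (x - x₀) + r⟫ := by
  rw [ContinuousLinearMap.adjoint_inner_left, ContinuousLinearMap.adjoint_inner_left, map_sub,
    inner_add_right, inner_sub_right, real_inner_self_eq_norm_sq]
  ring

lemma norm_linearization_add_residual_le {Y : Type*} [SeminormedAddCommGroup Y]
    {y y₀ yδ l : Y} {δ c : ℝ} (hc : 0 ≤ c) (hnoise : ‖yδ - y‖ ≤ δ)
    (htc : ‖y - y₀ - l‖ ≤ c * ‖y - y₀‖) :
    ‖l + (y₀ - yδ)‖ ≤ δ + c * (‖y₀ - yδ‖ + δ) := by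
  have hnoise' : ‖y - yδ‖ ≤ δ := by rwa [norm_sub_rev]
  have hdiff : ‖y - y₀‖ ≤ ‖y₀ - yδ‖ + δ := by
    rw [norm_sub_rev y₀ yδ]
    linarith [norm_sub_le_norm_sub_add_norm_sub y yδ y₀]
  calc ‖l + (y₀ - yδ)‖ = ‖(y - yδ) - (y - y₀ - l)‖ := by congr 1; abel
    _ ≤ ‖y - yδ‖ + ‖y - y₀ - l‖ := norm_sub_le _ _
    _ ≤ δ + c * ‖y - y₀‖ := add_le_add hnoise' htc
    _ ≤ δ + c * (‖y₀ - yδ‖ + δ) := by gcongr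

theorem solution_in_stripe_landweber_direction_general
    {X Y : Type*} [NormedAddCommGroup X] [InnerProductSpace ℝ X] [CompleteSpace X]
    [NormedAddCommGroup Y] [InnerProductSpace ℝ Y] [CompleteSpace Y]
    (F : X → Y) (xn : X) (F' : X →L[ℝ] Y)
    (x : X) (y yδ : Y) (δ ctc : ℝ) (hctc : 0 ≤ ctc)
    (hsol : F x = y) (hnoise : ‖yδ - y‖ ≤ δ)
    (htc : ‖F x - F xn - F' (x - xn)‖ ≤ ctc * ‖F x - F xn‖) :
    |⟪(ContinuousLinearMap.adjoint F') (F xn - yδ), x⟫ -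
        (⟪(ContinuousLinearMap.adjoint F') (F xn - yδ), xn⟫ - ‖F xn - yδ‖ ^ 2)| ≤
      ‖F xn - yδ‖ * (δ + ctc * (‖F xn - yδ‖ + δ)) := by
  subst hsol
  rw [inner_adjoint_sub_sub_norm_sq]
  calc _ ≤ ‖F xn - yδ‖ * ‖F' (x - xn) + (F xn - yδ)‖ := abs_real_inner_le_norm _ _
    _ ≤ _ := by gcongr; exact norm_linearization_add_residual_le hctc hnoise htc

/-- RESESOP stripe containment for the Landweber search direction: with residual
`R_n = F(x_n) − y^δ`, search direction `u_n = F'(x_n)* R_n`,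
`α_n = ⟪u_n, x_n⟫ − ‖R_n‖²` and `ξ_n = ‖R_n‖ (δ + c_tc(‖R_n‖ + δ))`, every
solution `x` of `F(x) = y` satisfying the tangential cone estimate lies in the
stripe `H(u_n, α_n, ξ_n)`. -/
theorem solution_in_stripe_landweber_direction
    {X Y : Type*} [NormedAddCommGroup X] [InnerProductSpace ℝ X] [CompleteSpace X]
    [NormedAddCommGroup Y] [InnerProductSpace ℝ Y] [CompleteSpace Y]
    (F : X → Y) (xn : X) (F' : X →L[ℝ] Y) (hF : HasFDerivAt F F' xn)
    (x : X) (y yδ : Y) (δ ctc : ℝ) (hδ : 0 ≤ δ) (hctc : 0 ≤ ctc)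
    (hsol : F x = y) (hnoise : ‖yδ - y‖ ≤ δ)
    (htc : ‖F x - F xn - F' (x - xn)‖ ≤ ctc * ‖F x - F xn‖) :
    |⟪(ContinuousLinearMap.adjoint F') (F xn - yδ), x⟫ -
        (⟪(ContinuousLinearMap.adjoint F') (F xn - yδ), xn⟫ - ‖F xn - yδ‖ ^ 2)| ≤
      ‖F xn - yδ‖ * (δ + ctc * (‖F xn - yδ‖ + δ)) :=
  solution_in_stripe_landweber_direction_general F xn F' x y yδ δ ctc hctc hsol hnoise htc
end

section
/- Let 0 < c_tc < 1, δ ≥ 0 and τ > (1 + c_tc)/(1 − c_tc). If a real number r satisfies r > τδ and r > 0, then r² > r (δ + c_tc (r + δ)). Consequently, in the RESESOP iteration with α_n := ⟨u_n, x_n⟩ − ‖R_n‖² and ξ_n := ‖R_n‖ (δ + c_tc (‖R_n‖ + δ)), as long as the residual satisfies ‖R_n‖ > τδ, the current iterate x_n satisfies ⟨u_n, x_n⟩ > α_n + ξ_n, i.e., x_n lies in H_>(u_n, α_n + ξ_n) above the stripe H(u_n, α_n, ξ_n). -/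
/-!
For `r > 0` the inequality `r² > r (δ + c (r + δ))` is `r (1 - c) > δ (1 + c)`, which follows from
`r > τ δ` and `τ (1 - c) > 1 + c`, the latter scaled by `δ ≥ 0`. The position of the iterate above
the stripe is this inequality for `r = ‖R_n‖`, which is positive because `τ δ ≥ 0`.
-/

open RealInnerProductSpace

lemma mul_one_add_lt_mul_one_sub_of_discrepancy {c δ τ r : ℝ} (hc : c < 1) (hδ : 0 ≤ δ)
    (hτ : (1 + c) / (1 - c) < τ) (hr : τ * δ < r) : δ * (1 + c) < r * (1 - c) := by
  have h1c : 0 < 1 - c := sub_pos.2 hc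
  have hτ' : 1 + c < τ * (1 - c) := (div_lt_iff₀ h1c).mp hτ
  calc δ * (1 + c) ≤ δ * (τ * (1 - c)) := mul_le_mul_of_nonneg_left hτ'.le hδ
    _ = τ * δ * (1 - c) := by ring
    _ < r * (1 - c) := mul_lt_mul_of_pos_right hr h1c

lemma mul_noise_bound_lt_sq_of_discrepancy {c δ τ r : ℝ} (hc : c < 1) (hδ : 0 ≤ δ)
    (hτ : (1 + c) / (1 - c) < τ) (hr : τ * δ < r) (hr₀ : 0 < r) :
    r * (δ + c * (r + δ)) < r ^ 2 := by
  have hgap := sub_pos.2 (mul_one_add_lt_mul_one_sub_of_discrepancy hc hδ hτ hr)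
  have hsplit : r ^ 2 - r * (δ + c * (r + δ)) = r * (r * (1 - c) - δ * (1 + c)) := by ring
  linarith [mul_pos hr₀ hgap]

/-- Discrepancy principle and position above the stripe: if `0 < c_tc < 1`,
`δ ≥ 0` and `τ > (1+c_tc)/(1−c_tc)`, then any `r > τδ` with `r > 0` satisfies
`r² > r(δ + c_tc(r+δ))`; consequently, as long as `‖R_n‖ > τδ`, the RESESOP
iterate `x_n` satisfies `⟪u_n, x_n⟫ > α_n + ξ_n`, i.e. it lies above the stripe. -/
theorem iterate_above_stripe
    {X Y : Type*} [NormedAddCommGroup X] [InnerProductSpace ℝ X]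
    [NormedAddCommGroup Y] [InnerProductSpace ℝ Y]
    (ctc δ τ : ℝ) (hctc₀ : 0 < ctc) (hctc₁ : ctc < 1) (hδ : 0 ≤ δ)
    (hτ : τ > (1 + ctc) / (1 - ctc)) :
    (∀ r : ℝ, r > τ * δ → r > 0 → r ^ 2 > r * (δ + ctc * (r + δ))) ∧
    (∀ (xn un : X) (Rn : Y), ‖Rn‖ > τ * δ →
      ⟪un, xn⟫ >
        (⟪un, xn⟫ - ‖Rn‖ ^ 2) + ‖Rn‖ * (δ + ctc * (‖Rn‖ + δ))) := by
  have key : ∀ r : ℝ, r > τ * δ → r > 0 → r ^ 2 > r * (δ + ctc * (r + δ)) :=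
    fun r hr hr₀ => mul_noise_bound_lt_sq_of_discrepancy hctc₁ hδ hτ hr hr₀
  refine ⟨key, fun xn un Rn hR => ?_⟩
  have hτ₀ : 0 < τ := (div_pos (by linarith) (sub_pos.2 hctc₁)).trans hτ
  have hR₀ : 0 < ‖Rn‖ := (mul_nonneg hτ₀.le hδ).trans_lt hR
  linarith [key ‖Rn‖ hR hR₀]
end

section
/- Let X be a real Hilbert space, u ∈ X \ {0}, α ∈ ℝ, ξ ≥ 0, and let x_n ∈ X satisfy ⟨u, x_n⟩ > α + ξ. Define the RESESOP update x_{n+1} := x_n − ((⟨u, x_n⟩ − (α + ξ))/‖u‖²) · u. Then for every z in the stripe H(u, α, ξ) (indeed for every z with ⟨u,z⟩ ≤ α + ξ) the descent estimate ‖z − x_{n+1}‖² ≤ ‖z − x_n‖² − ((⟨u, x_n⟩ − α − ξ)/‖u‖)² holds. -/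
open RealInnerProductSpace

/-- Descent estimate for the RESESOP update: if `⟪u, x_n⟫ > α + ξ` and
`x_{n+1} = x_n − ((⟪u,x_n⟫ − (α+ξ))/‖u‖²) u`, then every `z` with
`⟪u,z⟫ ≤ α + ξ` (in particular every `z` in the stripe `H(u,α,ξ)`) satisfies
`‖z − x_{n+1}‖² ≤ ‖z − x_n‖² − ((⟪u,x_n⟫ − α − ξ)/‖u‖)²`. -/
theorem resesop_descent_estimate
    {X : Type*} [NormedAddCommGroup X] [InnerProductSpace ℝ X]
    (u : X) (hu : u ≠ 0) (α ξ : ℝ) (hξ : 0 ≤ ξ)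
    (xn : X) (hxn : ⟪u, xn⟫ > α + ξ)
    (z : X) (hz : ⟪u, z⟫ ≤ α + ξ) :
    ‖z - (xn - ((⟪u, xn⟫ - (α + ξ)) / ‖u‖ ^ 2) • u)‖ ^ 2 ≤
      ‖z - xn‖ ^ 2 - ((⟪u, xn⟫ - α - ξ) / ‖u‖) ^ 2 := by
  set c : ℝ := ⟪u, xn⟫ - (α + ξ) with hc
  have hcpos : 0 < c := by simp [hc]; linarith
  have hun : (0:ℝ) < ‖u‖ := norm_pos_iff.mpr hu
  have hun2 : (0:ℝ) < ‖u‖ ^ 2 := by positivity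
  set t : ℝ := c / ‖u‖ ^ 2 with ht
  have key : z - (xn - t • u) = (z - xn) + t • u := by abel
  rw [key]
  have expand : ‖(z - xn) + t • u‖ ^ 2
      = ‖z - xn‖ ^ 2 + 2 * (t * ⟪u, z - xn⟫) + t ^ 2 * ‖u‖ ^ 2 := by
    rw [norm_add_sq_real, norm_smul, inner_smul_right, real_inner_comm]
    ring_nf
    simp [abs_mul_abs_self, mul_pow]
  rw [expand]
  have h1 : ⟪u, z - xn⟫ ≤ -c := by
    rw [inner_sub_right]; simp [hc]; linarith
  have h2 : t * ⟪u, z - xn⟫ ≤ t * (-c) := by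
    apply mul_le_mul_of_nonneg_left h1
    positivity
  have h3 : t ^ 2 * ‖u‖ ^ 2 = c ^ 2 / ‖u‖ ^ 2 := by
    rw [ht]; field_simp
  have h4 : ((⟪u, xn⟫ - α - ξ) / ‖u‖) ^ 2 = c ^ 2 / ‖u‖ ^ 2 := by
    rw [div_pow, hc]; ring_nf
  have h5 : t * (-c) = -(c ^ 2 / ‖u‖ ^ 2) := by
    rw [ht]; field_simp
  rw [h3, h4]
  nlinarith [h2, h5]
end
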